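/- arXiv:2106.04049 — 6 statements merged into one kernel-verified Lean document; each statement's English description precedes it below -/
import Mathlib

section
/- Let p ≥ 3 be a prime, λ ∈ F_p, and let v ∈ F_p^n be a nonzero vector. Then the probability that (M_n − λ·I_n)·v has at most ⌊n/4⌋ nonzero coordinates is at most 2^{−(n−⌊n/4⌋)} · binom(n, ⌊n/4⌋). -/
/-! If `(M - λI) v` has at most `⌊n/4⌋` nonzero coordinates, it vanishes on a set `T` of
`n - ⌊n/4⌋` rows. Fix `k` with `v k ≠ 0`. For `i ∈ T`, row `i` of `M v = λ v` determines the
entry `M i k` from the other entries of that row, because the two signs differ by `2`, which is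
invertible mod `p`. The entries `{i, k}`, `i ∈ T`, are distinct, so the event has probability at
most `2^(-|T|)`; a union bound over the `C(n, ⌊n/4⌋)` choices of `T` concludes. -/

open Finset Matrix

noncomputable section

/-- The sign `±1` associated to a Boolean. -/
def signb (R : Type*) [Ring R] (b : Bool) : R := if b then 1 else -1

open Classical in
/-- Uniform/counting probability of an event on a finite sample space. -/
def prob {Ω : Type*} [Fintype Ω] (E : Ω → Prop) : ℝ :=
  ((Finset.univ.filter E).card : ℝ) / (Fintype.card Ω : ℝ)

/-- The symmetric random sign matrix determined by the Boolean data `ω`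
(only the entries `ω i j` with `i ≤ j` are used); it is uniformly distributed
over symmetric `±1` matrices when `ω` is uniform. -/
def symMat (R : Type*) [Ring R] {n : ℕ} (ω : Fin n → Fin n → Bool) :
    Matrix (Fin n) (Fin n) R :=
  Matrix.of fun i j => signb R (ω (min i j) (max i j))

/-- Atom probability of a vector over `ZMod p` w.r.t. i.i.d. Rademacher signs. -/
def rho (p : ℕ) {ι : Type*} [Fintype ι] [DecidableEq ι] (w : ι → ZMod p) : ℝ :=
  ⨆ r : ZMod p, prob (fun ξ : ι → Bool => ∑ i, signb (ZMod p) (ξ i) * w i = r)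

/-- Discrepancy of a vector over `ZMod p` w.r.t. i.i.d. Rademacher signs. -/
def disc (p : ℕ) {ι : Type*} [Fintype ι] [DecidableEq ι] (w : ι → ZMod p) : ℝ :=
  ⨆ x : ZMod p,
    |prob (fun ξ : ι → Bool => ∑ i, signb (ZMod p) (ξ i) * w i = x) - 1 / (p : ℝ)|

lemma min_max_eq_min_max_iff {α : Type*} [LinearOrder α] {a b c d : α} :
    (min a b, max a b) = (min c d, max c d) ↔ a = c ∧ b = d ∨ a = d ∧ b = c := by
  constructor
  · intro h
    simp only [Prod.mk.injEq] at h
    rcases le_total a b with hab | hab <;> rcases le_total c d with hcd | hcd <;> simp_all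
  · rintro (⟨rfl, rfl⟩ | ⟨rfl, rfl⟩)
    · rfl
    · rw [min_comm, max_comm]

lemma prob_le_sum_of_forall_exists {Ω ι : Type*} [Fintype Ω] {E : Ω → Prop}
    (𝒯 : Finset ι) (F : ι → Ω → Prop) (h : ∀ ω, E ω → ∃ T ∈ 𝒯, F T ω) :
    prob E ≤ ∑ T ∈ 𝒯, prob (F T) := by
  classical
  unfold prob
  rw [← sum_div]
  gcongr
  calc ((univ.filter E).card : ℝ) ≤ ((𝒯.biUnion fun T => univ.filter (F T)).card : ℝ) := by
        gcongr
        intro ω hω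
        obtain ⟨T, hT, hF⟩ := h ω (mem_filter.mp hω).2
        exact mem_biUnion.mpr ⟨T, hT, mem_filter.mpr ⟨mem_univ ω, hF⟩⟩
    _ ≤ ∑ T ∈ 𝒯, ((univ.filter (F T)).card : ℝ) := by exact_mod_cast card_biUnion_le

lemma prob_le_one_div_pow_of_eqOn_compl {α β γ : Type*} [Fintype α] [Fintype β] [Fintype γ]
    [DecidableEq α] [DecidableEq β] [Nonempty γ] {E : (α → β → γ) → Prop} (P : Finset (α × β))
    (hE : ∀ f g, E f → E g → (∀ a b, (a, b) ∉ P → f a b = g a b) → f = g) :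
    prob E ≤ 1 / Fintype.card γ ^ P.card := by
  classical
  have hinj :
      Set.InjOn (fun (f : α → β → γ) (x : {x // x ∉ P}) => f x.1.1 x.1.2) (univ.filter E) :=
    fun f hf g hg hfg => hE f g (mem_filter.mp hf).2 (mem_filter.mp hg).2
      fun a b hab => congrFun hfg ⟨(a, b), hab⟩
  have hcard := card_le_card_of_injOn _ (fun _ _ => mem_coe.mpr (mem_univ _)) hinj
  simp only [card_univ, Fintype.card_fun, Fintype.card_subtype_compl, Fintype.card_coe,
    Fintype.card_prod] at hcard
  have hP : P.card ≤ Fintype.card α * Fintype.card β := by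
    simpa using P.card_le_univ
  have hγ : 0 < Fintype.card γ := Fintype.card_pos
  unfold prob
  rw [div_le_div_iff₀ (by positivity) (by positivity), one_mul, Fintype.card_fun,
    Fintype.card_fun, ← pow_mul, mul_comm (Fintype.card β)]
  calc ((univ.filter E).card : ℝ) * Fintype.card γ ^ P.card
      ≤ (Fintype.card γ : ℝ) ^ (Fintype.card α * Fintype.card β - P.card) *
          Fintype.card γ ^ P.card := by gcongr; exact_mod_cast hcard
    _ = _ := by rw [← pow_add, Nat.sub_add_cancel hP]; push_cast; rfl

section Sign

variable {R : Type*} [Ring R]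

lemma signb_injective (h2 : (2 : R) ≠ 0) : Function.Injective (signb R) := by
  have h : (1 : R) ≠ -1 := fun h => h2 (one_add_one_eq_two (R := R) ▸ eq_neg_iff_add_eq_zero.mp h)
  intro a b hab
  cases a <;> cases b <;> simp_all [signb, eq_comm]

lemma eq_of_sum_signb_mul_eq [NoZeroDivisors R] {ι : Type*} [Fintype ι] [DecidableEq ι]
    (h2 : (2 : R) ≠ 0) {a b : ι → Bool} {v : ι → R} {k : ι} (hk : v k ≠ 0)
    (hab : ∀ j ≠ k, a j = b j) (h : ∑ j, signb R (a j) * v j = ∑ j, signb R (b j) * v j) :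
    a k = b k := by
  have hrest :
      ∑ j ∈ univ.erase k, signb R (a j) * v j = ∑ j ∈ univ.erase k, signb R (b j) * v j :=
    sum_congr rfl fun j hj => by rw [hab j (ne_of_mem_erase hj)]
  rw [← add_sum_erase _ _ (mem_univ k), ← add_sum_erase _ _ (mem_univ k), hrest] at h
  exact signb_injective h2 (mul_right_cancel₀ hk (add_right_cancel h))

end Sign

lemma exists_card_eq_forall_eq_zero_of_ncard_le {ι M : Type*} [Fintype ι] [Zero M]
    {x : ι → M} {m : ℕ} (h : {i | x i ≠ 0}.ncard ≤ m) :
    ∃ T : Finset ι, T.card = Fintype.card ι - m ∧ ∀ i ∈ T, x i = 0 := by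
  classical
  have hzeros : Fintype.card ι - m ≤ (univ.filter fun i => x i = 0).card := by
    rw [Set.ncard_eq_toFinset_card', Set.toFinset_ofPred] at h
    simp only [ne_eq] at h
    have := card_filter_add_card_filter_not (s := univ) (fun i => x i = 0)
    rw [card_univ] at this
    omega
  obtain ⟨T, hT, hcard⟩ := exists_subset_card_eq hzeros
  exact ⟨T, hcard, fun i hi => (mem_filter.mp (hT hi)).2⟩

section SymMat

variable {R : Type*} [Ring R] {n : ℕ}

lemma symMat_mulVec_apply (ω : Fin n → Fin n → Bool) (v : Fin n → R) (i : Fin n) :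
    (symMat R ω *ᵥ v) i = ∑ j, signb R (ω (min i j) (max i j)) * v j :=
  rfl

lemma symMat_sub_smul_one_mulVec_eq_zero_iff (ω : Fin n → Fin n → Bool) (lam : R)
    (v : Fin n → R) (i : Fin n) :
    ((symMat R ω - lam • (1 : Matrix (Fin n) (Fin n) R)) *ᵥ v) i = 0 ↔
      (symMat R ω *ᵥ v) i = lam * v i := by
  rw [sub_mulVec, smul_mulVec, one_mulVec, Pi.sub_apply, Pi.smul_apply, smul_eq_mul, sub_eq_zero]

variable [NoZeroDivisors R] {v : Fin n → R} {lam : R} {k : Fin n} {T : Finset (Fin n)}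

/-- If `k ∈ T`, row `k` involves the entries `{k, j}`, `j ∈ T`, which are themselves only
determined by their rows; so row `k` is used last. -/
lemma eq_of_symMat_mulVec_eq_of_eqOn_compl (h2 : (2 : R) ≠ 0) (hk : v k ≠ 0)
    {ω ω' : Fin n → Fin n → Bool}
    (hω : ∀ i ∈ T, (symMat R ω *ᵥ v) i = lam * v i)
    (hω' : ∀ i ∈ T, (symMat R ω' *ᵥ v) i = lam * v i)
    (hoff : ∀ q r, (q, r) ∉ T.image (fun i => (min i k, max i k)) → ω q r = ω' q r) :
    ω = ω' := by
  have hrow : ∀ i ∈ T, (∀ j ≠ k, ω (min i j) (max i j) = ω' (min i j) (max i j)) →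
      ω (min i k) (max i k) = ω' (min i k) (max i k) := fun i hi hj =>
    eq_of_sum_signb_mul_eq (a := fun j => ω (min i j) (max i j))
      (b := fun j => ω' (min i j) (max i j)) h2 hk hj
      (by rw [← symMat_mulVec_apply, ← symMat_mulVec_apply, hω i hi, hω' i hi])
  have hne : ∀ i ∈ T, i ≠ k → ω (min i k) (max i k) = ω' (min i k) (max i k) :=
    fun i hi hik => hrow i hi fun j hjk => hoff _ _ <| by
      simp only [mem_image, not_exists, not_and]
      intro l _ h
      rcases min_max_eq_min_max_iff.mp h with ⟨-, h⟩ | ⟨-, h⟩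
      exacts [hjk h.symm, hik h.symm]
  funext q r
  by_cases hqr : (q, r) ∈ T.image (fun i => (min i k, max i k))
  · obtain ⟨i, hi, hiqr⟩ := mem_image.mp hqr
    cases hiqr
    rcases eq_or_ne i k with rfl | hik
    · refine hrow i hi fun j hji => ?_
      by_cases hj : j ∈ T
      · rw [min_comm, max_comm]
        exact hne j hj hji
      · refine hoff _ _ ?_
        simp only [mem_image, not_exists, not_and]
        intro l hl h
        rcases min_max_eq_min_max_iff.mp h with ⟨-, h⟩ | ⟨h, -⟩
        exacts [hji h.symm, hj (h ▸ hl)]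
    · exact hne i hi hik
  · exact hoff q r hqr

lemma prob_symMat_mulVec_eq_on_le (h2 : (2 : R) ≠ 0) (hk : v k ≠ 0) :
    prob (fun ω : Fin n → Fin n → Bool => ∀ i ∈ T, (symMat R ω *ᵥ v) i = lam * v i)
      ≤ 1 / 2 ^ T.card := by
  have hpairs : Function.Injective fun i : Fin n => (min i k, max i k) := fun i j h => by
    rcases min_max_eq_min_max_iff.mp h with ⟨h, -⟩ | ⟨rfl, rfl⟩
    exacts [h, rfl]
  calc _ ≤ 1 / (Fintype.card Bool : ℝ) ^ (T.image fun i => (min i k, max i k)).card :=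
        prob_le_one_div_pow_of_eqOn_compl _ fun ω ω' hω hω' =>
          eq_of_symMat_mulVec_eq_of_eqOn_compl h2 hk hω hω'
    _ = 1 / 2 ^ T.card := by
        rw [card_image_of_injective _ hpairs, Fintype.card_bool, Nat.cast_ofNat]

end SymMat

/-- For a fixed nonzero `v ∈ F_p^n`, the probability that `(M_n - λ I_n) v` has at
most `⌊n/4⌋` nonzero coordinates is at most `2^{-(n - ⌊n/4⌋)}·C(n, ⌊n/4⌋)`. -/
theorem sparse_image_probability (n p : ℕ) (hp : p.Prime) (hp3 : 3 ≤ p)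
    (lam : ZMod p) (v : Fin n → ZMod p) (hv : v ≠ 0) :
    prob (fun ω : Fin n → Fin n → Bool =>
        {i | ((symMat (ZMod p) ω - lam • (1 : Matrix (Fin n) (Fin n) (ZMod p))) *ᵥ v) i
          ≠ 0}.ncard ≤ n / 4)
      ≤ (n.choose (n / 4) : ℝ) / 2 ^ (n - n / 4) := by
  have := Fact.mk hp
  obtain ⟨k, hk⟩ := Function.ne_iff.mp hv
  have h2 : (2 : ZMod p) ≠ 0 := Ring.two_ne_zero (by rw [ZMod.ringChar_zmod_n]; omega)
  calc _ ≤ ∑ T ∈ univ.powersetCard (n - n / 4),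
          prob (fun ω : Fin n → Fin n → Bool => ∀ i ∈ T, (symMat _ ω *ᵥ v) i = lam * v i) :=
        prob_le_sum_of_forall_exists _ _ fun ω hω => by
          obtain ⟨T, hcard, hzero⟩ := exists_card_eq_forall_eq_zero_of_ncard_le hω
          refine ⟨T, mem_powersetCard.mpr ⟨subset_univ T, by simpa using hcard⟩, fun i hi => ?_⟩
          exact (symMat_sub_smul_one_mulVec_eq_zero_iff ω lam v i).mp (hzero i hi)
    _ ≤ ∑ _T ∈ univ.powersetCard (n - n / 4), 1 / 2 ^ (n - n / 4) :=
        sum_le_sum fun T hT => (mem_powersetCard.mp hT).2 ▸ prob_symMat_mulVec_eq_on_le h2 hk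
    _ = _ := by
        rw [sum_const, card_powersetCard, card_univ, Fintype.card_fin,
          Nat.choose_symm (Nat.div_le_self n 4), nsmul_eq_mul, mul_one_div]
end
end

section
/- Let p be an odd prime, m ≥ 1, and b = (b_1,…,b_m) ∈ F_p^m. Then disc_{F_p}(b) ≤ (1/p)·Σ_{ℓ ∈ F_p, ℓ≠0} ∏_{j=1}^{m} |cos(2π·(ℓb_j)^/p)|, and moreover disc_{F_p}(b) ≤ max_{ℓ ∈ F_p, ℓ≠0} exp(−Σ_{j=1}^{m} ||(ℓb_j)^/p||²_{ℝ/ℤ}). -/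
open Finset Matrix

noncomputable section

open Real

/-- Distance from a real number to the nearest integer (the `ℝ/ℤ` norm). -/
def distRZ (x : ℝ) : ℝ := |x - round x|

/-!
Fourier inversion on `ZMod p` writes `P[S = x]`, for the Rademacher sum `S = ∑ ξ_j b_j`, as
`(1/p) ∑_ℓ e(-ℓx) E[e(ℓS)]` with `e = ZMod.stdAddChar`, and independence of the signs gives
`E[e(ℓS)] = ∏_j cos(2π (ℓb_j)^/p)`. The frequency `ℓ = 0` contributes exactly `1/p`; bounding
the other terms in absolute value gives the first estimate.

For the second, `|cos(πy)| ≤ exp(-2‖y‖²_{ℝ/ℤ})`, and `cos(2π a/p) = cos(π · 2a/p)`, so the term of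
frequency `ℓ` is at most the exponential at frequency `2ℓ`, which is again nonzero because `p` is
odd. The remaining average of at most `p` such terms with weight `1/p` is bounded by their maximum.
-/

lemma distRZ_add_intCast (x : ℝ) (k : ℤ) : distRZ (x + k) = distRZ x := by
  rw [distRZ, distRZ, round_add_intCast, Int.cast_add, add_sub_add_right_eq_sub]

lemma distRZ_natCast_mod_div (n p : ℕ) : distRZ ((n % p : ℕ) / p) = distRZ (n / p) := by
  rcases Nat.eq_zero_or_pos p with rfl | hp
  · simp
  have hn : (n : ℝ) / p = (n % p : ℕ) / p + ((n / p : ℕ) : ℤ) := by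
    rw [Int.cast_natCast, div_add' _ _ _ (by positivity)]
    congr 1
    exact_mod_cast (Nat.mod_add_div' n p).symm
  rw [hn, distRZ_add_intCast]

lemma abs_cos_pi_mul_le_exp_of_abs_le_half {y : ℝ} (hy : |y| ≤ 1 / 2) :
    |cos (π * y)| ≤ exp (-(2 * y ^ 2)) := by
  obtain ⟨hy₁, hy₂⟩ := abs_le.mp hy
  have hcos_nonneg : 0 ≤ cos (π * y) :=
    cos_nonneg_of_neg_pi_div_two_le_of_le (by nlinarith [pi_pos]) (by nlinarith [pi_pos])
  have hquad : cos (π * y) ≤ 1 - 2 * y ^ 2 := by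
    have hπy : |π * y| ≤ π := by
      rw [abs_mul, abs_of_pos pi_pos]
      nlinarith [pi_pos]
    calc cos (π * y) ≤ 1 - 2 / π ^ 2 * (π * y) ^ 2 := cos_le_one_sub_mul_cos_sq hπy
      _ = 1 - 2 * y ^ 2 := by field_simp
  rw [abs_of_nonneg hcos_nonneg]
  linarith [add_one_le_exp (-(2 * y ^ 2))]

lemma abs_cos_pi_mul_le_exp (x : ℝ) : |cos (π * x)| ≤ exp (-(2 * distRZ x ^ 2)) := by
  have hperiodic : |cos (π * x)| = |cos (π * (x - round x))| := by
    rw [show π * x = π * (x - round x) + (round x : ℤ) * π by ring, cos_add_int_mul_pi,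
      abs_mul, abs_neg_one_zpow, one_mul]
  rw [hperiodic, distRZ, sq_abs]
  exact abs_cos_pi_mul_le_exp_of_abs_le_half (abs_sub_round x)

lemma AddChar.map_sum_eq_prod {ι A M : Type*} [AddCommMonoid A] [CommMonoid M]
    (ψ : AddChar A M) (s : Finset ι) (f : ι → A) : ψ (∑ i ∈ s, f i) = ∏ i ∈ s, ψ (f i) := by
  induction s using cons_induction with
  | empty => simp
  | cons a s ha ih => rw [sum_cons, prod_cons, AddChar.map_add_eq_mul, ih]

section ZMod

variable {p : ℕ} [NeZero p]

lemma prob_eq_sum_stdAddChar {Ω : Type*} [Fintype Ω] (f : Ω → ZMod p) (x : ZMod p) :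
    (prob (fun ω => f ω = x) : ℂ) =
      (1 / p) * ∑ l : ZMod p,
        ZMod.stdAddChar (-(l * x)) * ((∑ ω, ZMod.stdAddChar (l * f ω)) / Fintype.card Ω) := by
  have horth : ∀ ω, (if f ω = x then (1 : ℂ) else 0) =
      (1 / p) * ∑ l : ZMod p, ZMod.stdAddChar (-(l * x)) * ZMod.stdAddChar (l * f ω) := by
    intro ω
    simp_rw [← AddChar.map_add_eq_mul, show ∀ l : ZMod p, -(l * x) + l * f ω = l * (f ω - x)
      from fun l => by ring]
    rw [AddChar.sum_mulShift _ (ZMod.isPrimitive_stdAddChar p), ZMod.card]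
    by_cases h : f ω = x <;> simp [h, sub_eq_zero, NeZero.ne p]
  rw [prob, Complex.ofReal_div, Complex.ofReal_natCast, Complex.ofReal_natCast, natCast_card_filter,
    sum_congr rfl fun ω _ => by convert horth ω, ← mul_sum, mul_div_assoc, sum_comm, sum_div]
  refine congrArg _ (sum_congr rfl fun l _ => ?_)
  rw [← mul_sum, mul_div_assoc]

lemma ZMod.stdAddChar_add_stdAddChar_neg (a : ZMod p) :
    ZMod.stdAddChar a + ZMod.stdAddChar (-a) = 2 * (cos (2 * π * a.val / p) : ℂ) := by
  rw [AddChar.map_neg_eq_inv, ZMod.stdAddChar_apply, ZMod.toCircle_apply, ← Complex.exp_neg,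
    Complex.ofReal_cos, Complex.cos, Complex.ofReal_div]
  push_cast
  ring_nf

lemma abs_cos_two_pi_val_div_le_exp (a : ZMod p) :
    |cos (2 * π * a.val / p)| ≤ exp (-distRZ ((2 * a).val / p) ^ 2) := by
  have hval : (2 * a).val = (2 * a.val) % p := by
    rw [← ZMod.val_natCast, Nat.cast_mul, ZMod.natCast_val, ZMod.cast_id', id, Nat.cast_ofNat]
  have hangle : 2 * π * a.val / p = π * ((2 * a.val : ℕ) / p) := by push_cast; ring
  rw [hangle, hval, distRZ_natCast_mod_div]
  refine (abs_cos_pi_mul_le_exp _).trans (exp_le_exp.mpr ?_)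
  nlinarith [sq_nonneg (distRZ ((2 * a.val : ℕ) / p))]

section Rademacher

variable {ι : Type*} [Fintype ι]

lemma prod_abs_cos_le_exp (b : ι → ZMod p) (l : ZMod p) :
    ∏ i, |cos (2 * π * (l * b i).val / p)| ≤ exp (-∑ i, distRZ ((2 * l * b i).val / p) ^ 2) := by
  rw [← sum_neg_distrib, exp_sum]
  refine prod_le_prod (fun _ _ => abs_nonneg _) fun i _ => ?_
  rw [mul_assoc (2 : ZMod p)]
  exact abs_cos_two_pi_val_div_le_exp _

lemma sum_prod_abs_cos_le_iSup_exp (hodd : Odd p) (b : ι → ZMod p) :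
    (1 / p) * ∑ l ∈ univ.filter (fun l : ZMod p => l ≠ 0), ∏ i, |cos (2 * π * (l * b i).val / p)| ≤
      ⨆ l : {l : ZMod p // l ≠ 0}, exp (-∑ i, distRZ ((l.1 * b i).val / p) ^ 2) := by
  set E := ⨆ l : {l : ZMod p // l ≠ 0}, exp (-∑ i, distRZ ((l.1 * b i).val / p) ^ 2)
  have hbdd : BddAbove (Set.range fun l : {l : ZMod p // l ≠ 0} =>
      exp (-∑ i, distRZ ((l.1 * b i).val / p) ^ 2)) := (Set.finite_range _).bddAbove
  have htwo : IsUnit (2 : ZMod p) := by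
    simpa only [Nat.cast_ofNat] using
      (ZMod.isUnit_iff_coprime 2 p).mpr (Nat.coprime_two_left.mpr hodd)
  have hterm : ∀ l ∈ univ.filter (fun l : ZMod p => l ≠ 0),
      ∏ i, |cos (2 * π * (l * b i).val / p)| ≤ E := fun l hl =>
    (prod_abs_cos_le_exp b l).trans <| le_ciSup hbdd
      ⟨2 * l, htwo.mul_right_eq_zero.not.mpr (mem_filter.mp hl).2⟩
  calc _ ≤ (1 / p) * ((univ.filter (fun l : ZMod p => l ≠ 0)).card * E) := by
        gcongr
        simpa using sum_le_sum hterm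
    _ ≤ (1 / p) * (p * E) := by
        gcongr
        · exact Real.iSup_nonneg fun _ => (exp_pos _).le
        · exact_mod_cast (card_filter_le _ _).trans (ZMod.card p).le
    _ = E := by rw [one_div, inv_mul_cancel_left₀ (Nat.cast_ne_zero.mpr (NeZero.ne p))]

variable [DecidableEq ι]

lemma sum_stdAddChar_mul_rademacher_div_card (b : ι → ZMod p) (l : ZMod p) :
    (∑ ξ : ι → Bool, ZMod.stdAddChar (l * ∑ i, signb (ZMod p) (ξ i) * b i)) /
        Fintype.card (ι → Bool) = ∏ i, (cos (2 * π * (l * b i).val / p) : ℂ) := by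
  simp_rw [mul_sum, AddChar.map_sum_eq_prod]
  rw [← Fintype.prod_sum fun i c => ZMod.stdAddChar (l * (signb (ZMod p) c * b i)),
    Fintype.card_fun, Fintype.card_bool, Nat.cast_pow, ← card_univ, ← prod_const,
    ← prod_div_distrib]
  refine prod_congr rfl fun i _ => ?_
  rw [Fintype.sum_bool, signb, signb, if_pos rfl, if_neg Bool.false_ne_true, one_mul, neg_one_mul,
    mul_neg, ZMod.stdAddChar_add_stdAddChar_neg]
  push_cast
  ring

lemma prob_rademacher_sub_inv_eq (b : ι → ZMod p) (x : ZMod p) :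
    (prob (fun ξ : ι → Bool => ∑ i, signb (ZMod p) (ξ i) * b i = x) : ℂ) - 1 / p =
      (1 / p) * ∑ l ∈ univ.filter (fun l : ZMod p => l ≠ 0),
        ZMod.stdAddChar (-(l * x)) * ∏ i, (cos (2 * π * (l * b i).val / p) : ℂ) := by
  simp_rw [prob_eq_sum_stdAddChar, sum_stdAddChar_mul_rademacher_div_card]
  have hzero : ZMod.stdAddChar (-(0 * x)) * ∏ i, (cos (2 * π * (0 * b i).val / p) : ℂ) = 1 := by
    simp
  rw [← add_sum_erase _ _ (mem_univ 0), filter_ne', hzero, mul_add, mul_one, add_sub_cancel_left]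

lemma abs_prob_rademacher_sub_inv_le (b : ι → ZMod p) (x : ZMod p) :
    |prob (fun ξ : ι → Bool => ∑ i, signb (ZMod p) (ξ i) * b i = x) - 1 / p| ≤
      (1 / p) * ∑ l ∈ univ.filter (fun l : ZMod p => l ≠ 0),
        ∏ i, |cos (2 * π * (l * b i).val / p)| := by
  have hnorm := congrArg norm (prob_rademacher_sub_inv_eq b x)
  rw [← Complex.ofReal_natCast, ← Complex.ofReal_one, ← Complex.ofReal_div, ← Complex.ofReal_sub,
    Complex.norm_real, Real.norm_eq_abs, norm_mul, Complex.norm_real,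
    Real.norm_of_nonneg (by positivity)] at hnorm
  rw [hnorm]
  gcongr
  refine (norm_sum_le _ _).trans (sum_le_sum fun l _ => ?_)
  simp only [norm_mul, AddChar.norm_apply, one_mul, norm_prod, Complex.norm_real, Real.norm_eq_abs,
    le_refl]

lemma disc_le_sum_prod_abs_cos (b : ι → ZMod p) :
    disc p b ≤ (1 / p) * ∑ l ∈ univ.filter (fun l : ZMod p => l ≠ 0),
        ∏ i, |cos (2 * π * (l * b i).val / p)| :=
  ciSup_le (abs_prob_rademacher_sub_inv_le b)

end Rademacher

end ZMod

open Classical in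
theorem disc_fourier_bound_general (p : ℕ) [Fact p.Prime] (hodd : Odd p) (m : ℕ)
    (b : Fin m → ZMod p) :
    disc p b ≤ (1 / (p : ℝ)) *
        ∑ l ∈ Finset.univ.filter (fun l : ZMod p => l ≠ 0),
          ∏ j, |Real.cos (2 * π * (((l * b j).val : ℝ)) / p)| ∧
    disc p b ≤ ⨆ l : {l : ZMod p // l ≠ 0},
        Real.exp (-(∑ j, distRZ (((l.1 * b j).val : ℝ) / p) ^ 2)) :=
  ⟨disc_le_sum_prod_abs_cos b,
    (disc_le_sum_prod_abs_cos b).trans (sum_prod_abs_cos_le_iSup_exp hodd b)⟩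

open Classical in
/-- The Fourier-analytic bound on the discrepancy of a vector `b ∈ F_p^m`: it is
bounded by the cosine sum over nonzero frequencies, and by
`max_{ℓ ≠ 0} exp(-∑_j ‖ℓb_j/p‖²_{ℝ/ℤ})`. -/
theorem disc_fourier_bound (p : ℕ) [Fact p.Prime] (hodd : Odd p) (m : ℕ) (hm : 1 ≤ m)
    (b : Fin m → ZMod p) :
    disc p b ≤ (1 / (p : ℝ)) *
        ∑ l ∈ Finset.univ.filter (fun l : ZMod p => l ≠ 0),
          ∏ j, |Real.cos (2 * π * (((l * b j).val : ℝ)) / p)| ∧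
    disc p b ≤ ⨆ l : {l : ZMod p // l ≠ 0},
        Real.exp (-(∑ j, distRZ (((l.1 * b j).val : ℝ) / p) ^ 2)) :=
  disc_fourier_bound_general p hodd m b
end
end

section
/- Let p ≥ 3 be a prime, λ ∈ F_p, v ∈ F_p^n a nonzero vector, S ⊆ {1,…,n}, and let r be an integer with 0 ≤ r ≤ n − |S|. Then the probability that v is orthogonal (over F_p) to at least n − r of the rows of M_n − λ·I_n is at most binom(n, r) · ρ_{F_p}(v|_S)^{n − r − |S|}. -/
open Finset Matrix

noncomputable section

/-!
Fix a set `B` of `r` rows allowed to fail and a set `T ⊆ Bᶜ \ S` of `n - r - |S|` rows. As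
`T ∩ S = ∅`, the symmetric entries `M_{ij}`, `i ∈ T`, `j ∈ S`, are distinct independent signs.
Conditioning on all other entries, row `i ∈ T` is orthogonal to `v` only if
`∑_{j ∈ S} M_{ij} v_j` takes one prescribed value, which has probability at most `ρ(v|_S)`;
independence across rows gives `ρ(v|_S)^{|T|}`, and a union bound over the `binom(n, r)` choices
of `B` concludes.
-/

section prob

variable {Ω : Type*} [Fintype Ω]

lemma prob_nonneg (E : Ω → Prop) : 0 ≤ prob E := by
  unfold prob; positivity

lemma prob_le_one (E : Ω → Prop) : prob E ≤ 1 := by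
  unfold prob
  exact div_le_one_of_le₀ (mod_cast Finset.card_le_univ _) (Nat.cast_nonneg _)

lemma prob_mono {E F : Ω → Prop} (h : ∀ ω, E ω → F ω) : prob E ≤ prob F := by
  unfold prob
  gcongr with ω
  exact h ω

lemma prob_exists_mem_le_sum {ι : Type*} (s : Finset ι) (E : ι → Ω → Prop) :
    prob (fun ω => ∃ i ∈ s, E i ω) ≤ ∑ i ∈ s, prob (E i) := by
  unfold prob
  rw [← Finset.sum_div, ← Nat.cast_sum]
  gcongr
  classical
  refine (Finset.card_le_card fun ω hω => ?_).trans Finset.card_biUnion_le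
  simp only [Finset.mem_filter, Finset.mem_univ, true_and] at hω
  obtain ⟨i, hi, hEi⟩ := hω
  exact Finset.mem_biUnion.mpr ⟨i, hi, by simpa using hEi⟩

lemma prob_comp_equiv {Ω' : Type*} [Fintype Ω'] (e : Ω' ≃ Ω) (E : Ω → Prop) :
    prob (E ∘ e) = prob E := by
  classical
  simp only [prob, ← Fintype.card_subtype, Fintype.card_congr e]
  congr 2
  exact Fintype.card_congr (e.subtypeEquiv fun _ => Iff.rfl)

lemma prob_fst {Ω' : Type*} [Fintype Ω'] [Nonempty Ω'] (E : Ω → Prop) :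
    prob (fun x : Ω × Ω' => E x.1) = prob E := by
  classical
  simp only [prob, ← Fintype.card_subtype, Fintype.card_prod,
    Fintype.card_congr Equiv.prodSubtypeFstEquivSubtypeProd, Nat.cast_mul]
  exact mul_div_mul_right _ _ (by positivity)

lemma prob_prod_eq_sum_div {α β : Type*} [Fintype α] [Fintype β] (P : α → β → Prop) :
    prob (fun x : α × β => P x.1 x.2) = (∑ b, prob (P · b)) / Fintype.card β := by
  classical
  simp only [prob, ← Finset.sum_div, div_div, Fintype.card_prod, Nat.cast_mul]
  congr 1
  rw [← Nat.cast_sum]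
  simp only [Finset.card_filter]
  rw [Fintype.sum_prod_type_right]

lemma prob_prod_le_of_forall_le {α β : Type*} [Fintype α] [Fintype β] [Nonempty β]
    {P : α → β → Prop} {q : ℝ} (h : ∀ b, prob (P · b) ≤ q) :
    prob (fun x : α × β => P x.1 x.2) ≤ q := by
  rw [prob_prod_eq_sum_div, div_le_iff₀ (by positivity)]
  simpa [mul_comm] using Finset.sum_le_card_nsmul Finset.univ _ _ fun b _ => h b

lemma prob_forall_apply {ι α : Type*} [Fintype ι] [DecidableEq ι] [Fintype α] (Q : ι → α → Prop) :
    prob (fun f : ι → α => ∀ i, Q i (f i)) = ∏ i, prob (Q i) := by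
  classical
  have hfilter : Finset.univ.filter (fun f : ι → α => ∀ i, Q i (f i))
      = Fintype.piFinset fun i => Finset.univ.filter (Q i) := by
    ext f; simp
  simp only [prob, Finset.prod_div_distrib, Finset.prod_const, Finset.card_univ,
    Fintype.card_fun, Nat.cast_pow]
  rw [← Nat.cast_prod, ← Fintype.card_piFinset, ← hfilter]
  congr

def Function.Injective.extendProdEquiv {A X β : Type*} {f : A → X} (hf : Function.Injective f) :
    (A → β) × (X → β) ≃ (X → β) × (A → β) where
  toFun x := (Function.extend f x.1 x.2, x.2 ∘ f)
  invFun y := (y.1 ∘ f, Function.extend f y.2 y.1)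
  left_inv x := by
    ext
    · simp [hf.extend_apply]
    · by_cases h : ∃ a, f a = ‹X›
      · obtain ⟨a, rfl⟩ := h; simp [hf.extend_apply]
      · simp [Function.extend_apply' _ _ _ h]
  right_inv y := by
    ext
    · by_cases h : ∃ a, f a = ‹X›
      · obtain ⟨a, rfl⟩ := h; simp [hf.extend_apply]
      · simp [Function.extend_apply' _ _ _ h]
    · simp [hf.extend_apply]

lemma prob_le_of_forall_extend_le {A X β : Type*} [Fintype A] [Fintype X] [DecidableEq A]
    [DecidableEq X] [Fintype β] [Nonempty β] {f : A → X} (hf : Function.Injective f)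
    (E : (X → β) → Prop) {q : ℝ}
    (h : ∀ g : X → β, prob (fun a : A → β => E (Function.extend f a g)) ≤ q) :
    prob E ≤ q := by
  calc prob E = prob (fun y : (X → β) × (A → β) => E y.1) := (prob_fst E).symm
    _ = prob (fun x : (A → β) × (X → β) => E (Function.extend f x.1 x.2)) :=
      (prob_comp_equiv hf.extendProdEquiv (fun y => E y.1)).symm
    _ ≤ q := prob_prod_le_of_forall_le (P := fun a g => E (Function.extend f a g)) h

end prob

lemma exists_card_eq_forall_notMem_of_le_ncard {α : Type*} [Fintype α] {P : α → Prop} {r : ℕ}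
    (hr : r ≤ Fintype.card α) (h : Fintype.card α - r ≤ {i | P i}.ncard) :
    ∃ B ∈ Finset.powersetCard r Finset.univ, ∀ i ∉ B, P i := by
  classical
  have hbad : (Finset.univ.filter fun i => ¬ P i).card ≤ r := by
    have := Finset.card_filter_add_card_filter_not (s := Finset.univ) P
    rw [Set.ncard_eq_toFinset_card', Set.toFinset_ofPred] at h
    rw [Finset.card_univ] at this
    omega
  obtain ⟨B, hbadB, hB⟩ := Finset.exists_superset_card_eq hbad (by simpa using hr)
  refine ⟨B, Finset.mem_powersetCard_univ.mpr hB, fun i hi => ?_⟩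
  by_contra hPi
  exact hi (hbadB (by simpa using hPi))

lemma prob_le_rho (p : ℕ) {ι : Type*} [Fintype ι] [DecidableEq ι] (w : ι → ZMod p)
    (c : ZMod p) : prob (fun ξ : ι → Bool => ∑ i, signb (ZMod p) (ξ i) * w i = c) ≤ rho p w :=
  le_ciSup (f := fun c => prob (fun ξ : ι → Bool => ∑ i, signb (ZMod p) (ξ i) * w i = c))
    ⟨1, by rintro _ ⟨c, rfl⟩; exact prob_le_one _⟩ c

lemma symMat_sub_smul_one_mulVec_apply {R : Type*} [CommRing R] {n : ℕ}
    (ω : Fin n → Fin n → Bool) (lam : R) (v : Fin n → R) (i : Fin n) :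
    ((symMat R ω - lam • (1 : Matrix (Fin n) (Fin n) R)) *ᵥ v) i
      = ∑ j, signb R (ω (min i j) (max i j)) * v j - lam * v i := by
  rw [Matrix.sub_mulVec, Matrix.smul_mulVec, Matrix.one_mulVec]
  simp [Matrix.mulVec, dotProduct, symMat]

section rows

variable {n : ℕ} {S T : Finset (Fin n)}

def minMaxPair (i j : Fin n) : Fin n × Fin n := (min i j, max i j)

lemma injective_minMaxPair_of_disjoint (hTS : Disjoint T S) :
    Function.Injective fun x : T × S => minMaxPair (x.1 : Fin n) x.2 := by
  rintro ⟨i, j⟩ ⟨i', j'⟩ h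
  rcases min_max_eq_min_max_iff.mp h with ⟨hi, hj⟩ | ⟨hij, -⟩
  · exact Prod.ext (Subtype.ext hi) (Subtype.ext hj)
  · exact absurd (hij ▸ i.2) (Finset.disjoint_right.mp hTS j'.2)

lemma minMaxPair_notMem_range (hTS : Disjoint T S) {i j : Fin n} (hi : i ∈ T) (hj : j ∉ S) :
    ¬ ∃ x : T × S, minMaxPair (x.1 : Fin n) x.2 = minMaxPair i j := by
  rintro ⟨⟨i', j'⟩, h⟩
  rcases min_max_eq_min_max_iff.mp h with ⟨-, hj'⟩ | ⟨-, hj'⟩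
  · exact hj (hj' ▸ j'.2)
  · exact Finset.disjoint_left.mp hTS hi (hj' ▸ j'.2)

lemma prob_forall_mem_rows_eq_zero_le {p : ℕ} (lam : ZMod p) (v : Fin n → ZMod p)
    (hTS : Disjoint T S) :
    prob (fun ω : Fin n → Fin n → Bool =>
        ∀ i ∈ T, ((symMat (ZMod p) ω - lam • (1 : Matrix (Fin n) (Fin n) (ZMod p))) *ᵥ v) i = 0)
      ≤ rho p (fun i : S => v i) ^ T.card := by
  set f : T × S → Fin n × Fin n := fun x => minMaxPair x.1 x.2
  have hf : Function.Injective f := injective_minMaxPair_of_disjoint hTS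
  rw [← prob_comp_equiv (Equiv.curry (Fin n) (Fin n) Bool)]
  refine prob_le_of_forall_extend_le hf _ fun g => ?_
  set c : T → ZMod p := fun i => lam * v i - ∑ j ∈ Sᶜ, signb (ZMod p) (g (minMaxPair i.1 j)) * v j
  have hrow : ∀ (a : T × S → Bool) (i : T),
      ((symMat (ZMod p) (Function.curry (Function.extend f a g))
          - lam • (1 : Matrix (Fin n) (Fin n) (ZMod p))) *ᵥ v) i = 0
        ↔ ∑ j : S, signb (ZMod p) (a (i, j)) * v j = c i := by
    intro a i
    have hS : ∀ j : S, Function.extend f a g (minMaxPair i j) = a (i, j) :=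
      fun j => hf.extend_apply a g (i, j)
    have hSc : ∀ j ∈ Sᶜ, Function.extend f a g (minMaxPair i j) = g (minMaxPair i j) :=
      fun j hj => Function.extend_apply' _ _ _
        (minMaxPair_notMem_range hTS i.2 (Finset.mem_compl.mp hj))
    rw [symMat_sub_smul_one_mulVec_apply, sub_eq_zero, ← Finset.sum_add_sum_compl S,
      ← Finset.sum_coe_sort S, eq_sub_iff_add_eq]
    refine Iff.of_eq (congrArg (· = _) (congrArg₂ (· + ·) ?_ ?_))
    · exact Finset.sum_congr rfl fun j _ => congrArg (signb (ZMod p) · * v j) (hS j)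
    · exact Finset.sum_congr rfl fun j hj => congrArg (signb (ZMod p) · * v j) (hSc j hj)
  calc _ = prob ((fun b : T → S → Bool => ∀ i : T, ∑ j : S, signb (ZMod p) (b i j) * v j = c i)
          ∘ Equiv.curry T S Bool) := by
        congr 1
        ext a
        exact ⟨fun h i => (hrow a i).mp (h i i.2), fun h i hi => (hrow a ⟨i, hi⟩).mpr (h ⟨i, hi⟩)⟩
    _ = prob (fun b : T → S → Bool => ∀ i : T, ∑ j : S, signb (ZMod p) (b i j) * v j = c i) :=
        prob_comp_equiv _ _
    _ = ∏ i : T, prob (fun b : S → Bool => ∑ j : S, signb (ZMod p) (b j) * v j = c i) :=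
        prob_forall_apply (α := S → Bool) fun i b => ∑ j : S, signb (ZMod p) (b j) * v j = c i
    _ ≤ ∏ _i : T, rho p (fun i : S => v i) :=
        Finset.prod_le_prod (fun _ _ => prob_nonneg _) fun i _ => prob_le_rho p _ (c i)
    _ = rho p (fun i : S => v i) ^ T.card := by simp

end rows

lemma prob_forall_notMem_rows_eq_zero_le {n p : ℕ} (lam : ZMod p) (v : Fin n → ZMod p)
    (S B : Finset (Fin n)) :
    prob (fun ω : Fin n → Fin n → Bool =>
        ∀ i ∉ B, ((symMat (ZMod p) ω - lam • (1 : Matrix (Fin n) (Fin n) (ZMod p))) *ᵥ v) i = 0)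
      ≤ rho p (fun i : S => v i) ^ (n - B.card - S.card) := by
  have hcard : n - B.card - S.card ≤ (Bᶜ \ S).card := by
    have := Finset.le_card_sdiff S Bᶜ
    rw [Finset.card_compl, Fintype.card_fin] at this
    omega
  obtain ⟨T, hT, hTcard⟩ := Finset.exists_subset_card_eq hcard
  rw [← hTcard]
  refine (prob_mono fun ω hω i hi => hω i ?_).trans
    (prob_forall_mem_rows_eq_zero_le lam v (Finset.disjoint_left.mpr fun i hi => ?_))
  · exact (Finset.mem_sdiff.mp (hT hi)).2
  · exact Finset.mem_compl.mp (Finset.mem_sdiff.mp (hT hi)).1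

theorem orthogonal_to_many_rows_probability_general (n p : ℕ)
    (lam : ZMod p) (v : Fin n → ZMod p)
    (S : Finset (Fin n)) (r : ℕ) (hr : r ≤ n - S.card) :
    prob (fun ω : Fin n → Fin n → Bool =>
        n - r ≤ {i | ((symMat (ZMod p) ω
          - lam • (1 : Matrix (Fin n) (Fin n) (ZMod p))) *ᵥ v) i = 0}.ncard)
      ≤ (n.choose r : ℝ) * rho p (fun i : S => v i) ^ (n - r - S.card) := by
  have hrn : r ≤ Fintype.card (Fin n) := by rw [Fintype.card_fin]; omega
  calc _ ≤ prob (fun ω : Fin n → Fin n → Bool => ∃ B ∈ powersetCard r univ,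
          ∀ i ∉ B, ((symMat (ZMod p) ω - lam • (1 : Matrix (Fin n) (Fin n) (ZMod p))) *ᵥ v) i = 0) :=
        prob_mono fun ω h => exists_card_eq_forall_notMem_of_le_ncard hrn (by simpa using h)
    _ ≤ ∑ B ∈ powersetCard r univ, prob (fun ω : Fin n → Fin n → Bool =>
          ∀ i ∉ B, ((symMat (ZMod p) ω - lam • (1 : Matrix (Fin n) (Fin n) (ZMod p))) *ᵥ v) i = 0) :=
        prob_exists_mem_le_sum _ _
    _ ≤ ∑ _B ∈ powersetCard r (univ : Finset (Fin n)),
          rho p (fun i : S => v i) ^ (n - r - S.card) := by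
        refine sum_le_sum fun B hB => ?_
        rw [← (mem_powersetCard_univ.mp hB)]
        exact prob_forall_notMem_rows_eq_zero_le lam v S B
    _ = (n.choose r : ℝ) * rho p (fun i : S => v i) ^ (n - r - S.card) := by
        simp [card_powersetCard]

/-- For a fixed nonzero `v ∈ F_p^n`, a set `S` of coordinates and `0 ≤ r ≤ n - |S|`,
the probability that `v` is orthogonal to at least `n - r` rows of `M_n - λ I_n` is
at most `C(n,r)·ρ(v|_S)^{n - r - |S|}`. -/
theorem orthogonal_to_many_rows_probability (n p : ℕ) (hp : p.Prime) (hp3 : 3 ≤ p)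
    (lam : ZMod p) (v : Fin n → ZMod p) (hv : v ≠ 0)
    (S : Finset (Fin n)) (r : ℕ) (hr : r ≤ n - S.card) :
    prob (fun ω : Fin n → Fin n → Bool =>
        n - r ≤ {i | ((symMat (ZMod p) ω
          - lam • (1 : Matrix (Fin n) (Fin n) (ZMod p))) *ᵥ v) i = 0}.ncard)
      ≤ (n.choose r : ℝ) * rho p (fun i : S => v i) ^ (n - r - S.card) :=
  orthogonal_to_many_rows_probability_general n p lam v S r hr
end
end

section
/- Let F be a field and let M ∈ F^{n×n} be a symmetric matrix of rank r. Then there exists a subset I ⊆ {1,…,n} with |I| = r such that the principal submatrix of M with rows and columns indexed by I is invertible. -/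
open Finset Matrix

noncomputable section

/-! Choose rows of `M`, indexed by `I`, forming a basis of the row space, so that
`M = X * M[I, :]` for some `X`. Restricting to the columns in `I` gives
`M[:, I] = X * M[I, I]`. By symmetry `M[:, I] = M[I, :]ᵀ` has rank `|I|`, hence so does the
square matrix `M[I, I]`, which is therefore invertible. -/

namespace Matrix

variable {ι κ m n K : Type*} [Field K]

theorem isUnit_of_rank_eq_card [Fintype κ] [DecidableEq κ] {A : Matrix κ κ K}
    (h : A.rank = Fintype.card κ) : IsUnit A := by
  rw [← linearIndependent_rows_iff_isUnit, linearIndependent_iff_card_eq_finrank_span, ← h,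
    rank_eq_finrank_span_row, Set.finrank]

theorem exists_mul_eq_of_row_mem_span {R : Type*} [CommSemiring R] [Fintype κ]
    {M : Matrix m n R} {B : Matrix κ n R} (h : ∀ j, M j ∈ Submodule.span R (Set.range B.row)) :
    ∃ X : Matrix m κ R, M = X * B := by
  choose X hX using fun j => (Submodule.mem_span_range_iff_exists_fun R).mp (h j)
  refine ⟨of X, ?_⟩
  ext j k
  simp [← hX j, mul_apply]

theorem rank_eq_card_of_rows_linearIndependent_span [Finite m] [Fintype n] [Fintype κ]
    {M : Matrix m n K} {e : κ → m} (hli : LinearIndependent K (M.row ∘ e))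
    (hspan : ∀ j, M j ∈ Submodule.span K (Set.range (M.row ∘ e))) :
    M.rank = Fintype.card κ := by
  have hspan_eq : Submodule.span K (Set.range (M.row ∘ e)) = Submodule.span K (Set.range M.row) :=
    le_antisymm (Submodule.span_mono (Set.range_comp_subset_range _ _))
      (Submodule.span_le.mpr (by rintro _ ⟨j, rfl⟩; exact hspan j))
  rw [rank_eq_finrank_span_row, ← hspan_eq, linearIndependent_iff_card_eq_finrank_span.mp hli,
    Set.finrank]

theorem exists_finset_rows_linearIndependent_span [Finite m] (M : Matrix m n K) :
    ∃ I : Finset m, LinearIndependent K (M.row ∘ ((↑) : I → m)) ∧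
      ∀ j, M j ∈ Submodule.span K (Set.range (M.row ∘ ((↑) : I → m))) := by
  obtain ⟨b, -, -, hspan, hli⟩ :=
    exists_linearIndepOn_extension (linearIndepOn_empty K M.row) (Set.subset_univ _)
  obtain ⟨I, rfl⟩ := b.toFinite.exists_finset_coe
  refine ⟨I, hli, fun j => ?_⟩
  rw [Set.range_comp, Subtype.range_coe]
  exact hspan ⟨j, trivial, rfl⟩

theorem IsSymm.isUnit_submatrix_of_rows_linearIndependent_span [Fintype ι] [Fintype κ]
    [DecidableEq κ] {M : Matrix ι ι K} (hM : M.IsSymm) {e : κ → ι}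
    (hli : LinearIndependent K (M.row ∘ e))
    (hspan : ∀ j, M j ∈ Submodule.span K (Set.range (M.row ∘ e))) :
    IsUnit (M.submatrix e e) := by
  obtain ⟨X, hX⟩ := exists_mul_eq_of_row_mem_span hspan
  have hcols : M.submatrix id e = X * M.submatrix e e := congrArg (·.submatrix id e) hX
  have hcols_rank : (M.submatrix id e).rank = Fintype.card κ := by
    rw [← hM.eq, ← transpose_submatrix, rank_transpose]
    exact hli.rank_matrix
  refine isUnit_of_rank_eq_card (le_antisymm (rank_le_card_width _) ?_)
  calc Fintype.card κ = (X * M.submatrix e e).rank := by rw [← hcols, hcols_rank]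
    _ ≤ (M.submatrix e e).rank := rank_mul_le_right _ _

end Matrix

/-- A symmetric matrix of rank `r` over a field has an invertible `r × r`
principal submatrix. -/
theorem exists_invertible_principal_submatrix (F : Type*) [Field F] (n : ℕ)
    (M : Matrix (Fin n) (Fin n) F) (hM : M.IsSymm) :
    ∃ I : Finset (Fin n), I.card = M.rank ∧
      IsUnit (M.submatrix (fun i : I => (i : Fin n)) (fun i : I => (i : Fin n))) := by
  obtain ⟨I, hli, hspan⟩ := M.exists_finset_rows_linearIndependent_span
  refine ⟨I, ?_, hM.isUnit_submatrix_of_rows_linearIndependent_span hli hspan⟩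
  rw [rank_eq_card_of_rows_linearIndependent_span hli hspan, Fintype.card_coe]
end
end

section
/- Let F be a field, let A ∈ F^{t×t} be symmetric, let u ∈ F^t and z ∈ F, and let A' ∈ F^{(t+1)×(t+1)} be the symmetric matrix with top-left block A, last column (u, z), and last row (uᵀ, z). Then: (i) rank(A') = rank(A) + 2 if and only if u does not lie in the column space of A; (ii) rank(A') = rank(A) if and only if there exists w ∈ F^t with Aw = u and wᵀAw = z. -/
open Finset Matrix

noncomputable section

/-- The `(t+1) × (t+1)` matrix with top-left block `A`, last column `(u, z)` and
last row `(u'ᵀ, z)`. -/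
def border {R : Type*} [Ring R] {t : ℕ} (A : Matrix (Fin t) (Fin t) R)
    (u u' : Fin t → R) (z : R) : Matrix (Fin (t + 1)) (Fin (t + 1)) R :=
  Matrix.of fun i j =>
    if hi : (i : ℕ) < t then
      if hj : (j : ℕ) < t then A ⟨i, hi⟩ ⟨j, hj⟩ else u ⟨i, hi⟩
    else
      if hj : (j : ℕ) < t then u' ⟨j, hj⟩ else z

/-! Build the bordered matrix in two steps: append the column `u` to `A`, then the row `(uᵀ, z)`.
Each step raises the rank by one exactly when the new vector is not in the span of the old
columns, resp. rows, so the first step raises it iff `u ∉ col A`. Since `A` is symmetric, the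
combination `yᵀ [A | u]` of rows is `(A y, y ⬝ u)`, so `(uᵀ, z)` is a combination of the rows
iff `u = A y` and `z = y ⬝ u = yᵀ A y` for some `y`. -/

open Submodule

namespace Matrix

section Semiring

variable {R ι : Type*} [Semiring R] [Fintype ι] {n : ℕ}

theorem vecMul_of_snoc_col (N : Matrix ι (Fin n) R) (c y : ι → R) :
    y ᵥ* (of fun i => Fin.snoc (N i) (c i) : Matrix ι (Fin (n + 1)) R) =
      Fin.snoc (y ᵥ* N) (y ⬝ᵥ c) := by
  ext j
  cases j using Fin.lastCases <;> simp [vecMul, dotProduct]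

end Semiring

section Field

variable {F ι : Type*} [Field F] [Fintype ι] {n : ℕ}

open Classical in
theorem rank_of_snoc_row (N : Matrix (Fin n) ι F) (r : ι → F) :
    (of (Fin.snoc N.row r)).rank =
      N.rank + if r ∈ LinearMap.range N.vecMulLinear then 0 else 1 := by
  rw [rank_eq_finrank_span_row, rank_eq_finrank_span_row, range_vecMulLinear,
    show (of (Fin.snoc N.row r)).row = Fin.snoc N.row r from rfl, Fin.range_snoc]
  split_ifs with hr
  · rw [span_insert_eq_span hr, add_zero]
  · rw [span_insert, sup_comm, finrank_sup_span_singleton hr]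

open Classical in
theorem rank_of_snoc_col (N : Matrix ι (Fin n) F) (c : ι → F) :
    (of fun i => Fin.snoc (N i) (c i) : Matrix ι (Fin (n + 1)) F).rank =
      N.rank + if c ∈ LinearMap.range N.mulVecLin then 0 else 1 := by
  have htranspose : (of fun i => Fin.snoc (N i) (c i) : Matrix ι (Fin (n + 1)) F)ᵀ =
      of (Fin.snoc Nᵀ.row c) := by
    ext j i
    cases j using Fin.lastCases <;> simp
  have hrange : LinearMap.range Nᵀ.vecMulLinear = LinearMap.range N.mulVecLin := by
    ext v
    simp
  rw [← rank_transpose, htranspose, rank_of_snoc_row, rank_transpose, hrange]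

end Field

end Matrix

theorem border_eq_of_snoc_row {R : Type*} [Ring R] {t : ℕ} (A : Matrix (Fin t) (Fin t) R)
    (u u' : Fin t → R) (z : R) :
    border A u u' z = of (Fin.snoc (of fun i => Fin.snoc (A i) (u i)).row (Fin.snoc u' z)) := by
  ext i j
  cases i using Fin.lastCases <;> cases j using Fin.lastCases <;> simp [border]

section Symmetric

variable {F : Type*} [Field F] {t : ℕ} {A : Matrix (Fin t) (Fin t) F}

theorem snoc_mem_range_vecMulLinear_iff (hA : A.IsSymm) (u : Fin t → F) (z : F) :
    Fin.snoc u z ∈ LinearMap.range (of fun i => Fin.snoc (A i) (u i)).vecMulLinear ↔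
      ∃ w, A *ᵥ w = u ∧ w ⬝ᵥ (A *ᵥ w) = z := by
  have hvecMul : ∀ y, y ᵥ* A = A *ᵥ y := fun y => by rw [← vecMul_transpose, hA.eq]
  simp only [LinearMap.mem_range, vecMulLinear_apply, vecMul_of_snoc_col, Fin.snoc_inj,
    hvecMul]
  exact exists_congr fun w => and_congr_right fun hw => by rw [hw]

open Classical in
theorem rank_border_of_isSymm (hA : A.IsSymm) (u : Fin t → F) (z : F) :
    (border A u u z).rank = A.rank + (if ∃ w, A *ᵥ w = u then 0 else 1) +
      (if ∃ w, A *ᵥ w = u ∧ w ⬝ᵥ (A *ᵥ w) = z then 0 else 1) := by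
  rw [border_eq_of_snoc_row, rank_of_snoc_row, rank_of_snoc_col,
    snoc_mem_range_vecMulLinear_iff hA]
  simp only [LinearMap.mem_range, mulVecLin_apply]

end Symmetric

/-- For a symmetric matrix `A` bordered symmetrically by `(u, z)`: the rank
increases by `2` iff `u` is outside the column space of `A`, and the rank stays
the same iff `u = Aw` for some `w` with `wᵀAw = z`. -/
theorem rank_border_symmetric (F : Type*) [Field F] (t : ℕ)
    (A : Matrix (Fin t) (Fin t) F) (hA : A.IsSymm) (u : Fin t → F) (z : F) :
    ((border A u u z).rank = A.rank + 2 ↔ ¬∃ w : Fin t → F, A *ᵥ w = u) ∧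
    ((border A u u z).rank = A.rank ↔
      ∃ w : Fin t → F, A *ᵥ w = u ∧ w ⬝ᵥ (A *ᵥ w) = z) := by
  have hrank := rank_border_of_isSymm hA u z
  have hsolvable : (∃ w, A *ᵥ w = u ∧ w ⬝ᵥ (A *ᵥ w) = z) → ∃ w, A *ᵥ w = u :=
    fun ⟨w, hw, _⟩ => ⟨w, hw⟩
  split_ifs at hrank <;> grind
end
end

section
/- Let p be a prime, v ∈ F_p^n, let ξ be uniform on {−1,1}^n, and let S_1, …, S_q be pairwise disjoint subsets of {1,…,n}. Then |E[exp(2πi·((ξ·v)^)/p)]| ≤ ∏_{ℓ=1}^{q} (p · disc_{F_p}(v|_{S_ℓ})), where w^ ∈ {0,…,p−1} is the standard integer representative of w ∈ F_p and ξ·v is the F_p dot product. -/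
/-!
With `ψ = ZMod.stdAddChar`, the summand `ψ(ξ·v)` is the product of the `ψ(ξᵢ vᵢ)`, so averaging over
the independent signs factors the Fourier coefficient as `∏ᵢ E ψ(ξᵢ vᵢ)`, a product of factors of
modulus at most `1`. Discarding the coordinates outside the chunks and grouping the others chunk by
chunk bounds it by `∏ₗ |E ψ(ξ·v|_{S_ℓ})|`. Finally, for `X = ξ·w` one has
`E ψ(X) = ∑ₓ (P[X = x] - 1/p) ψ(x)` because `∑ₓ ψ(x) = 0`, and each of the `p` terms has modulus
at most `disc(w)`.
-/

open Finset Matrix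

noncomputable section

/-- `E[exp(2πi·(ξ·w)^/p)]` for a uniformly random sign vector `ξ`, where `(·)^`
is the standard integer representative in `{0, …, p-1}`. -/
def expE {ι : Type*} [Fintype ι] [DecidableEq ι] (p : ℕ) (w : ι → ZMod p) : ℂ :=
  (∑ ξ : ι → Bool,
      Complex.exp (2 * Real.pi * Complex.I *
        ((∑ i, signb (ZMod p) (ξ i) * w i).val : ℂ) / (p : ℂ))) /
    (Fintype.card (ι → Bool) : ℂ)

open Function ZMod

lemma AddChar.map_finset_sum {A M ι : Type*} [AddCommMonoid A] [CommMonoid M] (ψ : AddChar A M)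
    (s : Finset ι) (f : ι → A) : ψ (∑ i ∈ s, f i) = ∏ i ∈ s, ψ (f i) := by
  classical
  induction s using Finset.induction_on with
  | empty => simp
  | insert a s ha ih => rw [sum_insert ha, prod_insert ha, ψ.map_add_eq_mul, ih]

lemma sum_div_card_eq_sum_prob_mul {Ω α : Type*} [Fintype Ω] [Fintype α] (X : Ω → α) (f : α → ℂ) :
    (∑ ω, f (X ω)) / Fintype.card Ω = ∑ x, (prob (fun ω => X ω = x) : ℂ) * f x := by
  classical
  rw [← Finset.sum_fiberwise univ X, sum_div]
  refine sum_congr rfl fun x _ => ?_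
  rw [sum_congr rfl fun ω hω => by rw [(mem_filter.mp hω).2], sum_const, nsmul_eq_mul, prob]
  push_cast
  ring

section

variable {ι : Type*} [DecidableEq ι] {p : ℕ}

lemma expE_eq_sum_stdAddChar [Fintype ι] [NeZero p] (w : ι → ZMod p) :
    expE p w = (∑ ξ : ι → Bool, stdAddChar (∑ i, signb (ZMod p) (ξ i) * w i)) /
      Fintype.card (ι → Bool) := by
  simp [expE, stdAddChar_apply, toCircle_apply]

lemma abs_prob_sub_le_disc [Fintype ι] [NeZero p] (w : ι → ZMod p) (x : ZMod p) :
    |prob (fun ξ : ι → Bool => ∑ i, signb (ZMod p) (ξ i) * w i = x) - 1 / (p : ℝ)| ≤ disc p w :=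
  le_ciSup (f := fun x : ZMod p => |prob (fun ξ : ι → Bool => ∑ i, signb (ZMod p) (ξ i) * w i = x) -
    1 / (p : ℝ)|) (Finite.bddAbove_range _) x

lemma norm_expE_le_mul_disc [Fintype ι] (hp : 1 < p) (w : ι → ZMod p) :
    ‖expE p w‖ ≤ p * disc p w := by
  have : Fact (1 < p) := ⟨hp⟩
  set X : (ι → Bool) → ZMod p := fun ξ => ∑ i, signb (ZMod p) (ξ i) * w i
  have hψ : ∑ x : ZMod p, (stdAddChar x : ℂ) = 0 := by
    refine AddChar.sum_eq_zero_iff_ne_zero.mpr (AddChar.ne_zero_iff.mpr ⟨1, fun h => ?_⟩)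
    rw [← (stdAddChar (N := p)).map_zero_eq_one, injective_stdAddChar.eq_iff] at h
    exact one_ne_zero h
  have hcentered :
      expE p w = ∑ x, ((prob (fun ξ => X ξ = x) - 1 / p : ℝ) : ℂ) * stdAddChar x := by
    rw [expE_eq_sum_stdAddChar, sum_div_card_eq_sum_prob_mul X, ← sub_zero (∑ x, _),
      ← mul_zero ((1 / p : ℝ) : ℂ), ← hψ, mul_sum, ← sum_sub_distrib]
    push_cast
    simp only [sub_mul]
  calc ‖expE p w‖ ≤ ∑ x : ZMod p, |prob (fun ξ => X ξ = x) - 1 / p| := by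
        rw [hcentered]
        refine (norm_sum_le _ _).trans_eq (sum_congr rfl fun x _ => ?_)
        rw [norm_mul, AddChar.norm_apply, mul_one, Complex.norm_real, Real.norm_eq_abs]
    _ ≤ ∑ _x : ZMod p, disc p w := sum_le_sum fun x _ => abs_prob_sub_le_disc w x
    _ = p * disc p w := by rw [sum_const, card_univ, ZMod.card, nsmul_eq_mul]

/-- `E ψ(ξ a)` for a single Rademacher sign `ξ`. -/
def signMean (p : ℕ) [NeZero p] (a : ZMod p) : ℂ :=
  (∑ b : Bool, stdAddChar (signb (ZMod p) b * a)) / 2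

lemma norm_signMean_le_one [NeZero p] (a : ZMod p) : ‖signMean p a‖ ≤ 1 := by
  rw [signMean, norm_div, div_le_one (by norm_num)]
  refine (norm_sum_le _ _).trans ?_
  simp [AddChar.norm_apply]

lemma expE_eq_prod_signMean [Fintype ι] [NeZero p] (w : ι → ZMod p) :
    expE p w = ∏ i, signMean p (w i) := by
  simp only [expE_eq_sum_stdAddChar, AddChar.map_finset_sum, signMean, prod_div_distrib,
    Fintype.prod_sum, prod_const, card_univ, Fintype.card_fun, Fintype.card_bool]
  push_cast
  rfl

lemma expE_subtype_eq_prod_signMean [NeZero p] (w : ι → ZMod p) (T : Finset ι) :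
    expE p (fun i : T => w i) = ∏ i ∈ T, signMean p (w i) := by
  rw [expE_eq_prod_signMean, prod_coe_sort T fun i => signMean p (w i)]

lemma norm_expE_le_prod_norm_expE_subtype [Fintype ι] [NeZero p] {κ : Type*} [Fintype κ]
    (w : ι → ZMod p) (S : κ → Finset ι) (hS : Pairwise (Disjoint on S)) :
    ‖expE p w‖ ≤ ∏ l, ‖expE p (fun i : S l => w i)‖ := by
  classical
  rw [expE_eq_prod_signMean, norm_prod]
  simp only [expE_subtype_eq_prod_signMean, norm_prod]
  rw [← prod_biUnion (hS.set_pairwise _)]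
  exact prod_le_prod_of_subset_of_le_one (subset_univ _) (fun _ _ => norm_nonneg _)
    fun i _ _ => norm_signMean_le_one _

end

/-- The Fourier coefficient of `ξ ↦ ξ·v` factors over pairwise disjoint chunks
`S_1, …, S_q`, with each chunk contributing at most `p · disc(v|_{S_ℓ})`. -/
theorem fourier_coefficient_chunk_bound (p : ℕ) (hp : p.Prime) (n q : ℕ)
    (v : Fin n → ZMod p) (S : Fin q → Finset (Fin n))
    (hS : ∀ a b : Fin q, a ≠ b → Disjoint (S a) (S b)) :
    ‖expE p v‖ ≤ ∏ l : Fin q, ((p : ℝ) * disc p (fun i : S l => v i)) := by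
  have : NeZero p := ⟨hp.ne_zero⟩
  calc ‖expE p v‖ ≤ ∏ l, ‖expE p (fun i : S l => v i)‖ :=
        norm_expE_le_prod_norm_expE_subtype v S fun a b => hS a b
    _ ≤ ∏ l, ((p : ℝ) * disc p (fun i : S l => v i)) :=
        prod_le_prod (fun _ _ => norm_nonneg _) fun _ _ => norm_expE_le_mul_disc hp.one_lt _
end
end
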